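/- arXiv:2602.18597 — 4 statements merged into one kernel-verified Lean document; each statement's English description precedes it below -/
import Mathlib

section
/- Let 1 ≤ p < ∞ and set C_p = 4(p−1)/p². For all complex numbers a, b and every o ∈ ℂ with |o| = 1, one has Re((a − o·b)·conj(a·|a|^{p−2} − o·b·|b|^{p−2})) ≥ C_p·|a·|a|^{(p−2)/2} − o·b·|b|^{(p−2)/2}|², where for z ∈ ℂ and q ∈ ℝ the expression z·|z|^q is interpreted as 0 when z = 0. -/
/- ### Auxiliary analytic lemmas -/

private lemma exp_two_mul_sub_one (x : ℝ) :
    Real.exp (2*x) - 1 = 2 * Real.exp x * Real.sinh x := by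
  rw [Real.sinh_eq, Real.exp_neg, two_mul, Real.exp_add]
  have h := (Real.exp_pos x).ne'
  field_simp

private lemma cosh_sub_one (x : ℝ) : Real.cosh x - 1 = 2 * Real.sinh (x/2)^2 := by
  have h1 := Real.cosh_sq (x/2)
  have h2 := Real.cosh_two_mul (x/2)
  have hx : 2*(x/2) = x := by ring
  rw [hx] at h2
  nlinarith [h1, h2]

private lemma sinh_mul_sinh (A B : ℝ) :
    Real.sinh A * Real.sinh B = (Real.cosh (A+B) - Real.cosh (A-B))/2 := by
  rw [Real.cosh_add, Real.cosh_sub]; ring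

private lemma sinh_lemma {a b : ℝ} (hb : 0 ≤ b) (hab : b ≤ a) {u : ℝ} (hu : 0 ≤ u) :
    a * Real.sinh (b*u) ≤ b * Real.sinh (a*u) := by
  set f : ℝ → ℝ := fun x => b * Real.sinh (a*x) - a * Real.sinh (b*x) with hf
  have hd : ∀ x, HasDerivAt f (b*(Real.cosh (a*x)*(a*1)) - a*(Real.cosh (b*x)*(b*1))) x := by
    intro x
    exact (((Real.hasDerivAt_sinh (a*x)).comp x ((hasDerivAt_id x).const_mul a)).const_mul b).sub
      (((Real.hasDerivAt_sinh (b*x)).comp x ((hasDerivAt_id x).const_mul b)).const_mul a)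
  have hmono : MonotoneOn f (Set.Ici 0) := by
    apply monotoneOn_of_deriv_nonneg (convex_Ici 0)
    · exact fun x _ => (hd x).continuousAt.continuousWithinAt
    · exact fun x _ => (hd x).differentiableAt.differentiableWithinAt
    · intro x hx
      rw [(hd x).deriv]
      simp only [mul_one]
      rw [interior_Ici] at hx
      have hx0 : (0:ℝ) ≤ x := le_of_lt hx
      have hcc : Real.cosh (b*x) ≤ Real.cosh (a*x) := by
        rw [Real.cosh_le_cosh]
        rw [abs_of_nonneg (mul_nonneg hb hx0), abs_of_nonneg (mul_nonneg (hb.trans hab) hx0)]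
        exact mul_le_mul_of_nonneg_right hab hx0
      nlinarith [mul_nonneg (mul_nonneg hb (hb.trans hab)) (sub_nonneg.2 hcc)]
  have h0 : f 0 ≤ f u := hmono (Set.mem_Ici.2 le_rfl) (Set.mem_Ici.2 hu) hu
  simp only [hf, mul_zero, Real.sinh_zero] at h0
  linarith [h0]

private lemma sinh_sq_lemma {a b : ℝ} (hab : |b| ≤ a) (u : ℝ) :
    (a * Real.sinh (b*u))^2 ≤ (b * Real.sinh (a*u))^2 := by
  have ha : 0 ≤ a := (abs_nonneg b).trans hab
  have hbs : (b * Real.sinh (a*u))^2 = (|b| * Real.sinh (a*u))^2 := by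
    rcases abs_cases b with ⟨h, _⟩ | ⟨h, _⟩ <;> rw [h] <;> ring
  have hss : (a * Real.sinh (b*u))^2 = (a * Real.sinh (|b| * u))^2 := by
    rcases abs_cases b with ⟨h, _⟩ | ⟨h, _⟩ <;> rw [h]
    rw [show -b * u = -(b*u) by ring, Real.sinh_neg]; ring
  rw [hbs, hss]
  rcases le_or_gt 0 u with hu | hu
  · have h1 := sinh_lemma (abs_nonneg b) hab hu
    have h2 : 0 ≤ a * Real.sinh (|b| * u) := by
      apply mul_nonneg ha
      rw [← Real.sinh_zero, Real.sinh_le_sinh]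
      positivity
    exact pow_le_pow_left₀ h2 h1 2
  · have hu' : 0 ≤ -u := by linarith
    have h1 := sinh_lemma (abs_nonneg b) hab hu'
    have h2 : 0 ≤ a * Real.sinh (|b| * (-u)) := by
      apply mul_nonneg ha
      rw [← Real.sinh_zero, Real.sinh_le_sinh]
      positivity
    have h3 := pow_le_pow_left₀ h2 h1 2
    have e1 : (a * Real.sinh (|b| * (-u)))^2 = (a * Real.sinh (|b| * u))^2 := by
      rw [show |b| * (-u) = -(|b| * u) by ring, Real.sinh_neg]; ring
    have e2 : (|b| * Real.sinh (a*(-u)))^2 = (|b| * Real.sinh (a*u))^2 := by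
      rw [show a*(-u) = -(a*u) by ring, Real.sinh_neg]; ring
    rw [e1, e2] at h3
    exact h3

private lemma cosh_core (p : ℝ) (hp : 1 ≤ p) (θ : ℝ) :
    p^2 * (Real.cosh ((p-2)*θ) - 1) ≤ (p-2)^2 * (Real.cosh (p*θ) - 1) := by
  have h1 := cosh_sub_one ((p-2)*θ)
  have h2 := cosh_sub_one (p*θ)
  have hab : |p-2| ≤ p := by
    rw [abs_le]; constructor <;> linarith
  have key := sinh_sq_lemma hab (θ/2)
  have e1 : (p-2)*θ/2 = (p-2)*(θ/2) := by ring
  have e2 : p*θ/2 = p*(θ/2) := by ring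
  rw [h1, h2, e1, e2]
  nlinarith [key]

private lemma exp_form (p : ℝ) (hp : 1 ≤ p) (θ : ℝ) :
    4*(p-1) * (Real.exp (p*θ) - 1)^2 ≤
      p^2 * ((Real.exp ((p-1)*(2*θ)) - 1) * (Real.exp (2*θ) - 1)) := by
  have h1 : Real.exp (p*θ) - 1 = 2 * Real.exp (p*θ/2) * Real.sinh (p*θ/2) := by
    have h := exp_two_mul_sub_one (p*θ/2)
    rw [show 2*(p*θ/2) = p*θ by ring] at h
    exact h
  have h2 : Real.exp ((p-1)*(2*θ)) - 1 = 2 * Real.exp ((p-1)*θ) * Real.sinh ((p-1)*θ) := by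
    have h := exp_two_mul_sub_one ((p-1)*θ)
    rw [show 2*((p-1)*θ) = (p-1)*(2*θ) by ring] at h
    exact h
  have h3 : Real.exp (2*θ) - 1 = 2 * Real.exp θ * Real.sinh θ := exp_two_mul_sub_one θ
  rw [h1, h2, h3]
  have hprod := sinh_mul_sinh ((p-1)*θ) θ
  rw [show (p-1)*θ + θ = p*θ by ring, show (p-1)*θ - θ = (p-2)*θ by ring] at hprod
  have hsq : Real.sinh (p*θ/2)^2 = (Real.cosh (p*θ) - 1)/2 := by
    have := cosh_sub_one (p*θ); linarith
  have hcore := cosh_core p hp θ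
  have hc1 := Real.one_le_cosh (p*θ)
  have hE : Real.exp (p*θ/2) * Real.exp (p*θ/2) = Real.exp ((p-1)*θ) * Real.exp θ := by
    rw [← Real.exp_add, ← Real.exp_add]
    congr 1; ring
  have hkey : 4*(p-1) * Real.sinh (p*θ/2)^2 ≤ p^2 * (Real.sinh ((p-1)*θ) * Real.sinh θ) := by
    rw [hsq, hprod]
    nlinarith [hcore, hc1, sq_nonneg (p-2)]
  have hpos : (0:ℝ) < Real.exp ((p-1)*θ) * Real.exp θ :=
    mul_pos (Real.exp_pos _) (Real.exp_pos _)
  have expand : 4*(p-1) * (2 * Real.exp (p*θ/2) * Real.sinh (p*θ/2))^2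
      = 4 * (4*(p-1) * Real.sinh (p*θ/2)^2) * (Real.exp ((p-1)*θ) * Real.exp θ) := by
    rw [← hE]; ring
  rw [expand, show p^2 * (2 * Real.exp ((p-1)*θ) * Real.sinh ((p-1)*θ) * (2*Real.exp θ * Real.sinh θ))
      = 4 * (p^2 * (Real.sinh ((p-1)*θ) * Real.sinh θ)) * (Real.exp ((p-1)*θ) * Real.exp θ) from by ring]
  have hmul := mul_le_mul_of_nonneg_right hkey hpos.le
  nlinarith [hmul]

private lemma exp_split {X Y Z W : ℝ} (h1 : X = Z + W) (h2 : Y = Z) :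
    Real.exp X - Real.exp Y = Real.exp Z * (Real.exp W - 1) := by
  rw [h1, h2, Real.exp_add]; ring

private lemma endpoint_pos (p : ℝ) (hp : 1 ≤ p) {s t : ℝ} (hs : 0 < s) (ht : 0 < t) :
    4*(p-1) * (s * s^((p-2)/2) - t * t^((p-2)/2))^2 ≤
      p^2 * ((s * s^(p-2) - t * t^(p-2)) * (s - t)) := by
  obtain ⟨σ, rfl⟩ : ∃ σ, s = Real.exp σ := ⟨Real.log s, (Real.exp_log hs).symm⟩
  obtain ⟨τ, rfl⟩ : ∃ τ, t = Real.exp τ := ⟨Real.log t, (Real.exp_log ht).symm⟩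
  rw [← Real.exp_mul, ← Real.exp_mul, ← Real.exp_mul, ← Real.exp_mul,
    ← Real.exp_add, ← Real.exp_add, ← Real.exp_add, ← Real.exp_add]
  set θ := (σ - τ)/2 with hθ
  have key := exp_form p hp θ
  have E1 : Real.exp (σ + σ*((p-2)/2)) - Real.exp (τ + τ*((p-2)/2))
      = Real.exp (p*τ/2) * (Real.exp (p*θ) - 1) :=
    exp_split (by rw [hθ]; ring) (by ring)
  have E2 : Real.exp (σ + σ*(p-2)) - Real.exp (τ + τ*(p-2))
      = Real.exp ((p-1)*τ) * (Real.exp ((p-1)*(2*θ)) - 1) :=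
    exp_split (by rw [hθ]; ring) (by ring)
  have E3 : Real.exp σ - Real.exp τ = Real.exp τ * (Real.exp (2*θ) - 1) :=
    exp_split (by rw [hθ]; ring) rfl
  rw [E1, E2, E3]
  have E0 : Real.exp (p*τ/2) * Real.exp (p*τ/2) = Real.exp ((p-1)*τ) * Real.exp τ := by
    rw [← Real.exp_add, ← Real.exp_add]
    congr 1; ring
  have hpos : (0:ℝ) < Real.exp ((p-1)*τ) * Real.exp τ :=
    mul_pos (Real.exp_pos _) (Real.exp_pos _)
  have hmul := mul_le_mul_of_nonneg_right key hpos.le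
  have E0' : (Real.exp (p*τ/2) * (Real.exp (p*θ) - 1))^2
      = (Real.exp (p*θ) - 1)^2 * (Real.exp ((p-1)*τ) * Real.exp τ) := by
    rw [← E0]; ring
  rw [E0']
  nlinarith [hmul]

private lemma endpoint_neg (p : ℝ) (hp : 1 ≤ p) {s t : ℝ} (hs : 0 < s) (ht : 0 < t) :
    4*(p-1) * (s * s^((p-2)/2) + t * t^((p-2)/2))^2 ≤
      p^2 * ((s * s^(p-2) + t * t^(p-2)) * (s + t)) := by
  have hP : s^((p-2)/2) * s^((p-2)/2) = s^(p-2) := by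
    rw [← Real.rpow_add hs]; norm_num
  have hQ : t^((p-2)/2) * t^((p-2)/2) = t^(p-2) := by
    rw [← Real.rpow_add ht]; norm_num
  have hP0 : 0 < s^((p-2)/2) := Real.rpow_pos_of_pos hs _
  have hQ0 : 0 < t^((p-2)/2) := Real.rpow_pos_of_pos ht _
  have h1 : 4*(p-1) ≤ p^2 := by nlinarith [sq_nonneg (p-2)]
  have h2 : (s * s^((p-2)/2) + t * t^((p-2)/2))^2
      ≤ (s * s^(p-2) + t * t^(p-2)) * (s + t) := by
    rw [← hP, ← hQ]
    nlinarith [mul_nonneg (mul_pos hs ht).le (sq_nonneg (s^((p-2)/2) - t^((p-2)/2)))]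
  have h3 : (0:ℝ) ≤ (s * s^((p-2)/2) + t * t^((p-2)/2))^2 := sq_nonneg _
  nlinarith [mul_le_mul h1 h2 h3 (by positivity : (0:ℝ) ≤ p^2)]

private lemma cp_le_one {p : ℝ} (hp : 1 ≤ p) : 4*(p-1)/p^2 ≤ 1 := by
  rw [div_le_one (by positivity)]
  nlinarith [sq_nonneg (p-2)]

private lemma main_real (p : ℝ) (hp : 1 ≤ p) (s t r : ℝ) (hs : 0 ≤ s) (ht : 0 ≤ t)
    (hr : |r| ≤ s * t) :
    4*(p-1)/p^2 * (s^2 * (s^((p-2)/2))^2 + t^2 * (t^((p-2)/2))^2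
        - 2*(s^((p-2)/2) * t^((p-2)/2))*r)
      ≤ s^2 * s^(p-2) + t^2 * t^(p-2) - (s^(p-2) + t^(p-2)) * r := by
  have hp2 : (0:ℝ) < p^2 := by positivity
  have hCp0 : 0 ≤ 4*(p-1)/p^2 := div_nonneg (by linarith) (by positivity)
  have hCp1 : 4*(p-1)/p^2 ≤ 1 := cp_le_one hp
  rcases hs.eq_or_lt with rfl | hs
  · have hr0 : r = 0 := by
      have h0 : |r| ≤ 0 := by simpa using hr
      simpa using le_antisymm h0 (abs_nonneg r)
    subst hr0
    rcases ht.eq_or_lt with rfl | ht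
    · norm_num
    · have hQ : (t^((p-2)/2))^2 = t^(p-2) := by
        rw [sq, ← Real.rpow_add ht]; norm_num
      have hX : (0:ℝ) ≤ t^2 * t^(p-2) := by positivity
      have := mul_le_mul_of_nonneg_right hCp1 hX
      rw [hQ]
      nlinarith [this]
  rcases ht.eq_or_lt with rfl | ht
  · have hr0 : r = 0 := by
      have h0 : |r| ≤ 0 := by simpa using hr
      simpa using le_antisymm h0 (abs_nonneg r)
    subst hr0
    have hP : (s^((p-2)/2))^2 = s^(p-2) := by
      rw [sq, ← Real.rpow_add hs]; norm_num
    have hX : (0:ℝ) ≤ s^2 * s^(p-2) := by positivity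
    have := mul_le_mul_of_nonneg_right hCp1 hX
    rw [hP]
    nlinarith [this]
  -- main case : s, t > 0
  rw [div_mul_eq_mul_div, div_le_iff₀ hp2]
  have hP : s^((p-2)/2) * s^((p-2)/2) = s^(p-2) := by
    rw [← Real.rpow_add hs]; norm_num
  have hQ : t^((p-2)/2) * t^((p-2)/2) = t^(p-2) := by
    rw [← Real.rpow_add ht]; norm_num
  set P := s^((p-2)/2)
  set Q := t^((p-2)/2)
  have e1 := endpoint_pos p hp hs ht
  have e2 := endpoint_neg p hp hs ht
  rw [← hP, ← hQ] at e1 e2 ⊢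
  have hr1 : r ≤ s*t := (abs_le.1 hr).2
  have hr2 : -(s*t) ≤ r := (abs_le.1 hr).1
  have hu : 0 < s*t := mul_pos hs ht
  nlinarith [mul_nonneg (by linarith : (0:ℝ) ≤ s*t - r)
      (by linarith [e1] : (0:ℝ) ≤ p^2 * ((s*(P*P) - t*(Q*Q))*(s-t)) - 4*(p-1)*(s*P - t*Q)^2),
    mul_nonneg (by linarith : (0:ℝ) ≤ s*t + r)
      (by linarith [e2] : (0:ℝ) ≤ p^2 * ((s*(P*P) + t*(Q*Q))*(s+t)) - 4*(p-1)*(s*P + t*Q)^2),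
    hu]

private lemma re_identity (a b o : ℂ) (ho : ‖o‖ = 1) (S2 T2 : ℝ) :
    ((a - o * b) * (starRingEnd ℂ) (a * (S2:ℂ) - o * (b * (T2:ℂ)))).re
      = Complex.normSq a * S2 + Complex.normSq b * T2
        - (S2 + T2) * ((a * (starRingEnd ℂ) (o*b)).re) := by
  have ho2 : o.re*o.re + o.im*o.im = 1 := by
    have h := Complex.sq_norm o
    rw [ho, Complex.normSq_apply] at h
    nlinarith [h]
  simp only [map_sub, map_mul, Complex.conj_ofReal, Complex.sub_re, Complex.sub_im,
    Complex.mul_re, Complex.mul_im, Complex.conj_re, Complex.conj_im,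
    Complex.ofReal_re, Complex.ofReal_im, Complex.normSq_apply]
  linear_combination ((b.re*b.re + b.im*b.im) * T2) * ho2

private lemma abs_identity (a b o : ℂ) (ho : ‖o‖ = 1) (S1 T1 : ℝ) :
    (‖a * (S1:ℂ) - o * (b * (T1:ℂ))‖)^2
      = Complex.normSq a * S1^2 + Complex.normSq b * T1^2
        - 2*(S1*T1) * ((a * (starRingEnd ℂ) (o*b)).re) := by
  have ho2 : o.re*o.re + o.im*o.im = 1 := by
    have h := Complex.sq_norm o
    rw [ho, Complex.normSq_apply] at h
    nlinarith [h]
  rw [Complex.sq_norm]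
  simp only [Complex.normSq_apply, Complex.sub_re, Complex.sub_im, Complex.mul_re, Complex.mul_im,
    Complex.conj_re, Complex.conj_im, Complex.ofReal_re, Complex.ofReal_im]
  linear_combination (T1^2 * (b.re*b.re + b.im*b.im)) * ho2

/-- `z * |z|^q` (real power of the modulus); this is automatically `0` when `z = 0`. -/
noncomputable def mulAbsPow (z : ℂ) (q : ℝ) : ℂ := z * ((‖z‖ ^ q : ℝ) : ℂ)

/-- For `1 ≤ p` and `C_p = 4(p-1)/p²`, for all complex `a, b` and
unimodular `o`, one has
`Re((a − o·b) · conj(a·|a|^{p−2} − o·b·|b|^{p−2})) ≥ C_p · |a·|a|^{(p−2)/2} − o·b·|b|^{(p−2)/2}|²`. -/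
theorem stmt0 (p : ℝ) (hp : 1 ≤ p) (a b o : ℂ) (ho : ‖o‖ = 1) :
    4 * (p - 1) / p ^ 2 *
        ‖mulAbsPow a ((p - 2) / 2) - o * mulAbsPow b ((p - 2) / 2)‖ ^ 2 ≤
      ((a - o * b) *
          (starRingEnd ℂ) (mulAbsPow a (p - 2) - o * mulAbsPow b (p - 2))).re := by
  have hre := re_identity a b o ho (‖a‖ ^ (p-2)) (‖b‖ ^ (p-2))
  have habs := abs_identity a b o ho (‖a‖ ^ ((p-2)/2)) (‖b‖ ^ ((p-2)/2))
  have hr : |(a * (starRingEnd ℂ) (o*b)).re| ≤ ‖a‖ * ‖b‖ :=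
    calc |(a * (starRingEnd ℂ) (o*b)).re| ≤ ‖a * (starRingEnd ℂ) (o*b)‖ :=
          Complex.abs_re_le_norm _
      _ = ‖a‖ * ‖b‖ := by
          rw [norm_mul, Complex.norm_conj, norm_mul, ho, one_mul]
  have key := main_real p hp (‖a‖) (‖b‖)
    ((a * (starRingEnd ℂ) (o*b)).re) (norm_nonneg a) (norm_nonneg b) hr
  unfold mulAbsPow
  rw [habs, hre]
  rw [Complex.normSq_eq_norm_sq, Complex.normSq_eq_norm_sq]
  exact key
end

section
/- Let (X,m) be a discrete measure space, b a graph over (X,m), o a magnetic potential and c : X → [0,∞) a nonnegative electric potential, with associated quadratic form q(f,g) = (1/2)∑_{x,y∈X} b(x,y)(f(x) − o(x,y)f(y))·conj(g(x) − o(x,y)g(y)) + ∑_{x∈X} c(x)f(x)·conj(g(x)). Then for every finitely supported f : X → ℂ and every p ∈ [1,∞): Re q(f, f·|f|^{p−2}) ≥ (4(p−1)/p²)·q(f·|f|^{(p−2)/2}, f·|f|^{(p−2)/2}), where z·|z|^r := 0 for z = 0. -/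
open Real

lemma convexOn_sinh : ConvexOn ℝ (Set.Ici (0:ℝ)) Real.sinh := by
  apply convexOn_of_deriv2_nonneg (convex_Ici 0) Real.continuous_sinh.continuousOn
    Real.differentiable_sinh.differentiableOn
  · rw [Real.deriv_sinh]
    exact Real.differentiable_cosh.differentiableOn
  · intro x hx
    have : deriv^[2] Real.sinh x = Real.sinh x := by
      simp [Function.iterate_succ, Real.deriv_sinh, Real.deriv_cosh]
    rw [this]
    exact Real.sinh_nonneg_iff.2 (le_of_lt (by simpa using hx))

lemma sinh_mul_le (c y : ℝ) (hc0 : 0 ≤ c) (hc1 : c ≤ 1) (hy : 0 ≤ y) :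
    Real.sinh (c * y) ≤ c * Real.sinh y := by
  have := convexOn_sinh.2 (Set.mem_Ici.2 le_rfl) (Set.mem_Ici.2 hy)
    (by linarith : (0:ℝ) ≤ 1 - c) hc0 (by ring)
  simpa [Real.sinh_zero] using this

lemma cosh_mul_sub_one_le (c y : ℝ) (hc0 : 0 ≤ c) (hc1 : c ≤ 1) (hy : 0 ≤ y) :
    Real.cosh (c * y) - 1 ≤ c ^ 2 * (Real.cosh y - 1) := by
  set F : ℝ → ℝ := fun t => c ^ 2 * Real.cosh t - Real.cosh (c * t) with hF
  have hder : ∀ t : ℝ, HasDerivAt F (c ^ 2 * Real.sinh t - Real.sinh (c * t) * c) t := by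
    intro t
    have h1 : HasDerivAt (fun t : ℝ => c ^ 2 * Real.cosh t) (c ^ 2 * Real.sinh t) t :=
      (Real.hasDerivAt_cosh t).const_mul _
    have h2 : HasDerivAt (fun t : ℝ => Real.cosh (c * t)) (Real.sinh (c * t) * c) t := by
      have := (Real.hasDerivAt_cosh (c * t)).comp t ((hasDerivAt_id t).const_mul c)
      simpa [mul_comm, Function.comp_def] using this
    exact h1.sub h2
  have hmono : MonotoneOn F (Set.Ici (0:ℝ)) := by
    apply monotoneOn_of_deriv_nonneg (convex_Ici 0)
      (fun t _ => (hder t).differentiableAt.continuousAt.continuousWithinAt)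
      (fun t _ => (hder t).differentiableAt.differentiableWithinAt)
    intro t ht
    rw [(hder t).deriv]
    have ht0 : 0 ≤ t := le_of_lt (by simpa using ht)
    have h3 : Real.sinh (c * t) ≤ c * Real.sinh t := sinh_mul_le c t hc0 hc1 ht0
    have h4 : Real.sinh (c * t) * c ≤ c * Real.sinh t * c :=
      mul_le_mul_of_nonneg_right h3 hc0
    nlinarith
  have := hmono (Set.mem_Ici.2 le_rfl) (Set.mem_Ici.2 hy) hy
  simp only [hF, mul_zero, Real.cosh_zero] at this
  nlinarith

lemma sinh_mul_sinh_ge (a b y : ℝ) (ha : 0 ≤ a) (hb : 0 ≤ b) (hab : a + b = 1)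
    (hy : 0 ≤ y) : 4 * a * b * Real.sinh (y / 2) ^ 2 ≤ Real.sinh (a * y) * Real.sinh (b * y) := by
  have key : Real.cosh ((a - b) * y) - 1 ≤ (a - b) ^ 2 * (Real.cosh y - 1) := by
    have h1 : Real.cosh ((a - b) * y) = Real.cosh (|a - b| * y) := by
      rw [← Real.cosh_abs, abs_mul, abs_of_nonneg hy]
    rw [h1, ← sq_abs (a - b)]
    exact cosh_mul_sub_one_le _ _ (abs_nonneg _) (by rw [abs_le]; constructor <;> linarith) hy
  have hprod : Real.sinh (a * y) * Real.sinh (b * y)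
      = (Real.cosh (a * y + b * y) - Real.cosh (a * y - b * y)) / 2 := by
    rw [Real.cosh_add, Real.cosh_sub]; ring
  have h2 : a * y + b * y = y := by rw [← add_mul, hab, one_mul]
  have h3 : a * y - b * y = (a - b) * y := by ring
  have hcy : Real.cosh y = 1 + 2 * Real.sinh (y / 2) ^ 2 := by
    have := Real.cosh_two_mul (y / 2)
    have h4 : 2 * (y / 2) = y := by ring
    rw [h4] at this
    have := Real.cosh_sq (y / 2)
    nlinarith
  have hc2 : (a - b) ^ 2 = 1 - 4 * a * b := by nlinarith
  have key2 : Real.cosh ((a - b) * y) - 1 ≤ (1 - 4 * a * b) * (2 * Real.sinh (y / 2) ^ 2) := by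
    calc Real.cosh ((a - b) * y) - 1 ≤ (a - b) ^ 2 * (Real.cosh y - 1) := key
    _ = (1 - 4 * a * b) * (2 * Real.sinh (y / 2) ^ 2) := by rw [hc2, hcy]; ring
  rw [hprod, h2, h3]
  linarith

lemma exp_sub_exp (A B : ℝ) :
    Real.exp A - Real.exp B = 2 * Real.exp ((A + B) / 2) * Real.sinh ((A - B) / 2) := by
  rw [Real.sinh_eq]
  rw [show 2 * Real.exp ((A + B) / 2) * ((Real.exp ((A - B) / 2) - Real.exp (-((A - B) / 2))) / 2)
      = Real.exp ((A + B) / 2) * Real.exp ((A - B) / 2)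
        - Real.exp ((A + B) / 2) * Real.exp (-((A - B) / 2)) from by ring,
    ← Real.exp_add, ← Real.exp_add,
    show (A + B) / 2 + (A - B) / 2 = A from by ring,
    show (A + B) / 2 + -((A - B) / 2) = B from by ring]

lemma core_aux (s u v : ℝ) (hs0 : 0 < s) (hs2 : s ≤ 2) (hv : 0 ≤ v) (huv : v ≤ u) :
    s * (2 - s) * (u - v) ^ 2 ≤ (u ^ s - v ^ s) * (u ^ (2 - s) - v ^ (2 - s)) := by
  have hu : 0 ≤ u := le_trans hv huv
  rcases eq_or_lt_of_le hv with hv0 | hv0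
  · -- v = 0
    rcases eq_or_lt_of_le hu with hu0 | hu0
    · rw [← hu0, ← hv0]; simp
    · rw [← hv0]
      rcases eq_or_lt_of_le hs2 with hs2' | hs2'
      · rw [hs2']; simp
      · rw [Real.zero_rpow (ne_of_gt hs0), Real.zero_rpow (by linarith : 2 - s ≠ 0)]
        have h1 : (u ^ s - 0) * (u ^ (2 - s) - 0) = u ^ (2:ℝ) := by
          rw [sub_zero, sub_zero, ← Real.rpow_add hu0]; norm_num
        rw [h1, Real.rpow_two]
        nlinarith [sq_nonneg (1 - s), sq_nonneg u, mul_pos hu0 hu0]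
  · -- 0 < v ≤ u
    have hu0 : 0 < u := lt_of_lt_of_le hv0 huv
    set Xl := Real.log u with hX
    set Yl := Real.log v with hY
    have hXY : Yl ≤ Xl := Real.log_le_log hv0 huv
    have hy : 0 ≤ Xl - Yl := by linarith
    have hru : ∀ r : ℝ, u ^ r = Real.exp (r * Xl) := fun r => by
      rw [Real.rpow_def_of_pos hu0 r, mul_comm]
    have hrv : ∀ r : ℝ, v ^ r = Real.exp (r * Yl) := fun r => by
      rw [Real.rpow_def_of_pos hv0 r, mul_comm]
    have hu' : u = Real.exp Xl := (Real.exp_log hu0).symm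
    have hv' : v = Real.exp Yl := (Real.exp_log hv0).symm
    have key := sinh_mul_sinh_ge (s / 2) ((2 - s) / 2) (Xl - Yl) (by linarith) (by linarith)
      (by ring) hy
    have e1 : u - v = 2 * Real.exp ((Xl + Yl) / 2) * Real.sinh ((Xl - Yl) / 2) := by
      rw [hu', hv', exp_sub_exp]
    have e2 : u ^ s - v ^ s
        = 2 * Real.exp (s * (Xl + Yl) / 2) * Real.sinh (s / 2 * (Xl - Yl)) := by
      rw [hru, hrv, exp_sub_exp, show (s * Xl - s * Yl) / 2 = s / 2 * (Xl - Yl) from by ring,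
        show (s * Xl + s * Yl) / 2 = s * (Xl + Yl) / 2 from by ring]
    have e3 : u ^ (2 - s) - v ^ (2 - s)
        = 2 * Real.exp ((2 - s) * (Xl + Yl) / 2) * Real.sinh ((2 - s) / 2 * (Xl - Yl)) := by
      rw [hru, hrv, exp_sub_exp,
        show ((2 - s) * Xl - (2 - s) * Yl) / 2 = (2 - s) / 2 * (Xl - Yl) from by ring,
        show ((2 - s) * Xl + (2 - s) * Yl) / 2 = (2 - s) * (Xl + Yl) / 2 from by ring]
    have eexp : Real.exp (s * (Xl + Yl) / 2) * Real.exp ((2 - s) * (Xl + Yl) / 2)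
        = Real.exp ((Xl + Yl) / 2) * Real.exp ((Xl + Yl) / 2) := by
      rw [← Real.exp_add, ← Real.exp_add]; ring_nf
    have hE : 0 < Real.exp ((Xl + Yl) / 2) := Real.exp_pos _
    rw [e1, e2, e3]
    calc s * (2 - s) * (2 * Real.exp ((Xl + Yl) / 2) * Real.sinh ((Xl - Yl) / 2)) ^ 2
        = (4 * (s / 2) * ((2 - s) / 2) * Real.sinh ((Xl - Yl) / 2) ^ 2)
            * (4 * (Real.exp ((Xl + Yl) / 2) * Real.exp ((Xl + Yl) / 2))) := by ring
      _ ≤ (Real.sinh (s / 2 * (Xl - Yl)) * Real.sinh ((2 - s) / 2 * (Xl - Yl)))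
            * (4 * (Real.exp ((Xl + Yl) / 2) * Real.exp ((Xl + Yl) / 2))) := by
          apply mul_le_mul_of_nonneg_right _ (by positivity)
          simpa [show (Xl - Yl) / 2 = (Xl - Yl) / 2 from rfl] using key
      _ = 2 * Real.exp (s * (Xl + Yl) / 2) * Real.sinh (s / 2 * (Xl - Yl)) *
            (2 * Real.exp ((2 - s) * (Xl + Yl) / 2) * Real.sinh ((2 - s) / 2 * (Xl - Yl))) := by
          rw [← eexp]; ring

lemma core (s u v : ℝ) (hs0 : 0 < s) (hs2 : s ≤ 2) (hu : 0 ≤ u) (hv : 0 ≤ v) :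
    s * (2 - s) * (u - v) ^ 2 ≤ (u ^ s - v ^ s) * (u ^ (2 - s) - v ^ (2 - s)) := by
  rcases le_total v u with h | h
  · exact core_aux s u v hs0 hs2 hv h
  · have := core_aux s v u hs0 hs2 hu h
    calc s * (2 - s) * (u - v) ^ 2 = s * (2 - s) * (v - u) ^ 2 := by ring
      _ ≤ (v ^ s - u ^ s) * (v ^ (2 - s) - u ^ (2 - s)) := this
      _ = (u ^ s - v ^ s) * (u ^ (2 - s) - v ^ (2 - s)) := by ring

lemma sq_rpow_half (α r : ℝ) (hα : 0 ≤ α) : (α ^ (r / 2)) ^ 2 = α ^ r := by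
  rw [← Real.rpow_natCast (α ^ (r / 2)) 2, ← Real.rpow_mul hα]
  norm_num

lemma L5 (p α β : ℝ) (hp : 1 ≤ p) (hα : 0 ≤ α) (hβ : 0 ≤ β) :
    4 * (p - 1) / p ^ 2 * (α * α ^ ((p - 2) / 2) - β * β ^ ((p - 2) / 2)) ^ 2
      ≤ (α - β) * (α * (α ^ ((p - 2) / 2)) ^ 2 - β * (β ^ ((p - 2) / 2)) ^ 2) := by
  have hp0 : 0 < p := lt_of_lt_of_le one_pos hp
  have key : ∀ γ : ℝ, 0 ≤ γ → γ * γ ^ ((p - 2) / 2) = γ ^ (p / 2) := by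
    intro γ hγ
    rcases eq_or_lt_of_le hγ with h0 | h0
    · rw [← h0, Real.zero_rpow (by positivity : p / 2 ≠ 0), zero_mul]
    · nth_rewrite 1 [← Real.rpow_one γ]
      rw [← Real.rpow_add h0, show (1:ℝ) + (p - 2) / 2 = p / 2 from by ring]
  rcases eq_or_lt_of_le hp with hp1 | hp1
  · -- p = 1
    rw [← hp1, show (4:ℝ) * (1 - 1) / 1 ^ 2 = 0 from by norm_num, zero_mul]
    have key1 : ∀ γ : ℝ, 0 ≤ γ → γ * (γ ^ ((1 - 2 : ℝ) / 2)) ^ 2 = if γ = 0 then 0 else 1 := by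
      intro γ hγ
      rcases eq_or_lt_of_le hγ with h0 | h0
      · rw [← h0]; simp
      · rw [if_neg (ne_of_gt h0), sq_rpow_half _ _ hγ]
        rw [show (1:ℝ) - 2 = -1 by norm_num, Real.rpow_neg_one]
        field_simp
    rw [key1 α hα, key1 β hβ]
    split_ifs <;> nlinarith
  · -- p > 1
    have hs0 : 0 < 2 / p := by positivity
    have hs2 : 2 / p ≤ 2 := by
      rw [div_le_iff₀ hp0]; nlinarith
    have hcore := core (2 / p) (α ^ (p / 2)) (β ^ (p / 2)) hs0 hs2
      (Real.rpow_nonneg hα _) (Real.rpow_nonneg hβ _)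
    have hback : ∀ γ : ℝ, 0 ≤ γ → (γ ^ (p / 2)) ^ (2 / p : ℝ) = γ := by
      intro γ hγ
      rw [← Real.rpow_mul hγ, show p / 2 * (2 / p) = 1 from by field_simp, Real.rpow_one]
    have hback2 : ∀ γ : ℝ, 0 ≤ γ →
        (γ ^ (p / 2)) ^ (2 - 2 / p : ℝ) = γ * (γ ^ ((p - 2) / 2)) ^ 2 := by
      intro γ hγ
      rw [sq_rpow_half _ _ hγ]
      rcases eq_or_lt_of_le hγ with h0 | h0
      · rw [← h0, Real.zero_rpow (by positivity : p / 2 ≠ 0),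
          Real.zero_rpow (by
            have h2p : 2 / p < 2 := by rw [div_lt_iff₀ hp0]; nlinarith
            intro h; linarith : (2:ℝ) - 2 / p ≠ 0)]
        simp
      · rw [← Real.rpow_mul hγ, show p / 2 * (2 - 2 / p) = p - 1 from by field_simp]
        nth_rewrite 2 [← Real.rpow_one γ]
        rw [← Real.rpow_add h0, show (1:ℝ) + (p - 2) = p - 1 from by ring]
    rw [hback α hα, hback β hβ, hback2 α hα, hback2 β hβ] at hcore
    rw [key α hα, key β hβ]
    calc 4 * (p - 1) / p ^ 2 * (α ^ (p / 2) - β ^ (p / 2)) ^ 2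
        = 2 / p * (2 - 2 / p) * (α ^ (p / 2) - β ^ (p / 2)) ^ 2 := by
          rw [show 2 / p * (2 - 2 / p) = 4 * (p - 1) / p ^ 2 from by field_simp; ring]
      _ ≤ _ := hcore

lemma real_ptwise (p α β t : ℝ) (hp : 1 ≤ p) (hα : 0 ≤ α) (hβ : 0 ≤ β)
    (ht : |t| ≤ α * β) :
    4 * (p - 1) / p ^ 2 *
        ((α * α ^ ((p - 2) / 2)) ^ 2 + (β * β ^ ((p - 2) / 2)) ^ 2
          - 2 * (α ^ ((p - 2) / 2)) * (β ^ ((p - 2) / 2)) * t)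
      ≤ (α * α ^ ((p - 2) / 2)) ^ 2 + (β * β ^ ((p - 2) / 2)) ^ 2
          - t * ((α ^ ((p - 2) / 2)) ^ 2 + (β ^ ((p - 2) / 2)) ^ 2) := by
  have hp0 : 0 < p := lt_of_lt_of_le one_pos hp
  set A := α ^ ((p - 2) / 2) with hA
  set B := β ^ ((p - 2) / 2) with hB
  have hA0 : 0 ≤ A := Real.rpow_nonneg hα _
  have hB0 : 0 ≤ B := Real.rpow_nonneg hβ _
  set κ := 4 * (p - 1) / p ^ 2 with hκ
  have hκ0 : 0 ≤ κ := div_nonneg (by linarith) (by positivity)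
  have hκ1 : κ ≤ 1 := by
    rw [hκ, div_le_one (by positivity)]; nlinarith [sq_nonneg (p - 2)]
  have hslope : 0 ≤ A ^ 2 + B ^ 2 - 2 * κ * A * B := by
    nlinarith [sq_nonneg (A - B), mul_nonneg hA0 hB0]
  have ht' : t ≤ α * β := le_trans (le_abs_self t) ht
  have hL5 := L5 p α β hp hα hβ
  have hprod : 0 ≤ (α * β - t) * (A ^ 2 + B ^ 2 - 2 * κ * A * B) :=
    mul_nonneg (by linarith) hslope
  nlinarith [hL5, hprod]

open Complex in
lemma re_formula (a b ω : ℂ) (hω : ‖ω‖ = 1) (C D : ℝ) :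
    ((a - ω * b) * (starRingEnd ℂ) (a * (C : ℂ) - ω * (b * (D : ℂ)))).re
      = (‖a‖) ^ 2 * C + (‖b‖) ^ 2 * D
        - (ω * b * (starRingEnd ℂ) a).re * (C + D) := by
  have hω' : ω.re ^ 2 + ω.im ^ 2 = 1 := by
    have h := Complex.sq_norm ω
    rw [hω] at h
    simpa [Complex.normSq_apply, sq] using h.symm
  simp only [Complex.sq_norm, Complex.normSq_apply, map_sub, map_mul, Complex.conj_ofReal,
    Complex.sub_re, Complex.mul_re, Complex.mul_im, Complex.sub_im, Complex.conj_re,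
    Complex.conj_im, Complex.ofReal_re, Complex.ofReal_im]
  ring_nf
  linear_combination ((b.re ^ 2 + b.im ^ 2) * D) * hω'

open Complex in
lemma normsq_formula (a b ω : ℂ) (hω : ‖ω‖ = 1) (A B : ℝ) :
    ((a * (A : ℂ) - ω * (b * (B : ℂ))) * (starRingEnd ℂ) (a * (A : ℂ) - ω * (b * (B : ℂ)))).re
      = (‖a‖) ^ 2 * A ^ 2 + (‖b‖) ^ 2 * B ^ 2
        - 2 * A * B * (ω * b * (starRingEnd ℂ) a).re := by
  have hω' : ω.re ^ 2 + ω.im ^ 2 = 1 := by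
    have h := Complex.sq_norm ω
    rw [hω] at h
    simpa [Complex.normSq_apply, sq] using h.symm
  simp only [Complex.sq_norm, Complex.normSq_apply, map_sub, map_mul, Complex.conj_ofReal,
    Complex.sub_re, Complex.mul_re, Complex.mul_im, Complex.sub_im, Complex.conj_re,
    Complex.conj_im, Complex.ofReal_re, Complex.ofReal_im]
  ring_nf
  linear_combination ((b.re ^ 2 + b.im ^ 2) * B ^ 2) * hω'

lemma cplx_ptwise (p : ℝ) (hp : 1 ≤ p) (a b ω : ℂ) (hω : ‖ω‖ = 1) :
    4 * (p - 1) / p ^ 2 *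
        ((a * ((‖a‖ ^ ((p - 2) / 2) : ℝ) : ℂ)
            - ω * (b * ((‖b‖ ^ ((p - 2) / 2) : ℝ) : ℂ))) *
          (starRingEnd ℂ) (a * ((‖a‖ ^ ((p - 2) / 2) : ℝ) : ℂ)
            - ω * (b * ((‖b‖ ^ ((p - 2) / 2) : ℝ) : ℂ)))).re
      ≤ ((a - ω * b) *
          (starRingEnd ℂ) (a * ((‖a‖ ^ (p - 2) : ℝ) : ℂ)
            - ω * (b * ((‖b‖ ^ (p - 2) : ℝ) : ℂ)))).re := by
  set α := ‖a‖ with hα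
  set β := ‖b‖ with hβ
  have hα0 : 0 ≤ α := norm_nonneg a
  have hβ0 : 0 ≤ β := norm_nonneg b
  set t := (ω * b * (starRingEnd ℂ) a).re with htdef
  have ht : |t| ≤ α * β := by
    calc |t| ≤ ‖ω * b * (starRingEnd ℂ) a‖ := Complex.abs_re_le_norm _
      _ = α * β := by rw [norm_mul, norm_mul, hω, RCLike.norm_conj, one_mul, mul_comm]
  rw [re_formula a b ω hω _ _, normsq_formula a b ω hω _ _]
  rw [← sq_rpow_half α (p - 2) hα0, ← sq_rpow_half β (p - 2) hβ0]
  have := real_ptwise p α β t hp hα0 hβ0 ht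
  nlinarith [this]

lemma c_ptwise (p : ℝ) (hp : 1 ≤ p) (cx : ℝ) (hcx : 0 ≤ cx) (a : ℂ) :
    4 * (p - 1) / p ^ 2 *
        ((cx : ℂ) * ((a * ((‖a‖ ^ ((p - 2) / 2) : ℝ) : ℂ)) *
          (starRingEnd ℂ) (a * ((‖a‖ ^ ((p - 2) / 2) : ℝ) : ℂ)))).re
      ≤ ((cx : ℂ) * (a * (starRingEnd ℂ) (a * ((‖a‖ ^ (p - 2) : ℝ) : ℂ)))).re := by
  have hp0 : 0 < p := lt_of_lt_of_le one_pos hp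
  set A := ‖a‖ ^ ((p - 2) / 2) with hA
  set C := ‖a‖ ^ (p - 2) with hC
  have hAC : A ^ 2 = C := sq_rpow_half _ _ (norm_nonneg a)
  have e1 : (a * (A : ℂ)) * (starRingEnd ℂ) (a * (A : ℂ)) = ((Complex.normSq a * A ^ 2 : ℝ) : ℂ) := by
    rw [Complex.mul_conj]
    congr 1
    rw [map_mul, Complex.normSq_ofReal]
    ring
  have e2 : a * (starRingEnd ℂ) (a * (C : ℂ)) = ((Complex.normSq a * C : ℝ) : ℂ) := by
    rw [map_mul, Complex.conj_ofReal, ← mul_assoc, Complex.mul_conj]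
    norm_cast
  rw [e1, e2, ← Complex.ofReal_mul, ← Complex.ofReal_mul, Complex.ofReal_re,
    Complex.ofReal_re, ← hAC]
  have hκ1 : 4 * (p - 1) / p ^ 2 ≤ 1 := by
    rw [div_le_one (by positivity)]; nlinarith [sq_nonneg (p - 2)]
  have hκ0 : 0 ≤ 4 * (p - 1) / p ^ 2 := div_nonneg (by linarith) (by positivity)
  have hv : 0 ≤ cx * (Complex.normSq a * A ^ 2) :=
    mul_nonneg hcx (mul_nonneg (Complex.normSq_nonneg a) (sq_nonneg A))
  nlinarith

lemma summable_main {X : Type*} [Countable X] (b : X → X → ℝ) (hb0 : ∀ x y, 0 ≤ b x y)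
    (hbsymm : ∀ x y, b x y = b y x) (hbsum : ∀ x, Summable fun y => b x y)
    (o : X → X → ℂ) (ho1 : ∀ x y, ‖o x y‖ = 1)
    (g h : X → ℂ) (hg : (Function.support g).Finite) (hh : (Function.support h).Finite) :
    Summable (fun z : X × X => (b z.1 z.2 : ℂ) *
      ((g z.1 - o z.1 z.2 * g z.2) * (starRingEnd ℂ) (h z.1 - o z.1 z.2 * h z.2))) := by
  classical
  set F : Finset X := hg.toFinset ∪ hh.toFinset with hF
  set χ : X → ℝ := fun x => if x ∈ F then 1 else 0 with hχ
  have hχ0 : ∀ x, 0 ≤ χ x := fun x => by rw [hχ]; dsimp only; split_ifs <;> norm_num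
  set Mg : ℝ := ∑ x ∈ hg.toFinset, ‖g x‖ with hMg
  set Mh : ℝ := ∑ x ∈ hh.toFinset, ‖h x‖ with hMh
  have hMg0 : 0 ≤ Mg := Finset.sum_nonneg fun _ _ => norm_nonneg _
  have hMh0 : 0 ≤ Mh := Finset.sum_nonneg fun _ _ => norm_nonneg _
  have hgM : ∀ x, ‖g x‖ ≤ Mg := by
    intro x
    by_cases hx : x ∈ hg.toFinset
    · exact Finset.single_le_sum (fun i _ => norm_nonneg (g i)) hx
    · have : g x = 0 := by
        by_contra h0
        exact hx (hg.mem_toFinset.2 h0)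
      rw [this, norm_zero]; exact hMg0
  have hhM : ∀ x, ‖h x‖ ≤ Mh := by
    intro x
    by_cases hx : x ∈ hh.toFinset
    · exact Finset.single_le_sum (fun i _ => norm_nonneg (h i)) hx
    · have : h x = 0 := by
        by_contra h0
        exact hx (hh.mem_toFinset.2 h0)
      rw [this, norm_zero]; exact hMh0
  set K : ℝ := 4 * Mg * Mh with hK
  have hK0 : 0 ≤ K := by positivity
  have h1 : Summable (fun z : X × X => b z.1 z.2 * χ z.1) := by
    rw [summable_prod_of_nonneg (fun z => mul_nonneg (hb0 _ _) (hχ0 _))]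
    constructor
    · exact fun x => (hbsum x).mul_right (χ x) |>.congr (fun y => by ring)
    · apply Summable.congr (f := fun x => (∑' y, b x y) * χ x)
      · apply summable_of_ne_finset_zero (s := F)
        intro x hx
        have : χ x = 0 := by rw [hχ]; simp [hx]
        rw [this, mul_zero]
      · intro x
        rw [← tsum_mul_right]
  have h2 : Summable (fun z : X × X => b z.1 z.2 * χ z.2) := by
    have := (Equiv.prodComm X X).summable_iff.2 h1
    exact this.congr fun z => by
      simp only [Function.comp, Equiv.prodComm_apply, Prod.snd_swap, Prod.fst_swap]
      rw [hbsymm z.2 z.1]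
  apply Summable.of_norm
  refine Summable.of_nonneg_of_le (fun z => norm_nonneg _) ?_
    ((h1.mul_left K).add (h2.mul_left K))
  intro z
  obtain ⟨x, y⟩ := z
  by_cases hxy : x ∈ F ∨ y ∈ F
  · have hnorm : ‖(b x y : ℂ) * ((g x - o x y * g y) * (starRingEnd ℂ) (h x - o x y * h y))‖
        ≤ b x y * K := by
      rw [norm_mul, norm_mul, Complex.norm_real, Real.norm_of_nonneg (hb0 x y)]
      have n1 : ‖g x - o x y * g y‖ ≤ 2 * Mg := by
        calc ‖g x - o x y * g y‖ ≤ ‖g x‖ + ‖o x y * g y‖ := norm_sub_le _ _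
          _ = ‖g x‖ + ‖g y‖ := by
              rw [norm_mul]
              have : ‖o x y‖ = 1 := by rw [ho1]
              rw [this, one_mul]
          _ ≤ 2 * Mg := by have := hgM x; have := hgM y; linarith
      have n2 : ‖(starRingEnd ℂ) (h x - o x y * h y)‖ ≤ 2 * Mh := by
        rw [RCLike.norm_conj]
        calc ‖h x - o x y * h y‖ ≤ ‖h x‖ + ‖o x y * h y‖ := norm_sub_le _ _
          _ = ‖h x‖ + ‖h y‖ := by
              rw [norm_mul]
              have : ‖o x y‖ = 1 := by rw [ho1]
              rw [this, one_mul]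
          _ ≤ 2 * Mh := by have := hhM x; have := hhM y; linarith
      calc b x y * (‖g x - o x y * g y‖ * ‖(starRingEnd ℂ) (h x - o x y * h y)‖)
          ≤ b x y * (2 * Mg * (2 * Mh)) := by
            apply mul_le_mul_of_nonneg_left _ (hb0 x y)
            exact mul_le_mul n1 n2 (norm_nonneg _) (by positivity)
        _ = b x y * K := by rw [hK]; ring
    have hχ1 : 1 ≤ χ x + χ y := by
      rw [hχ]
      rcases hxy with hx | hy
      · have := hχ0 y
        simp only [hχ] at this ⊢
        rw [if_pos hx]; linarith
      · have := hχ0 x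
        simp only [hχ] at this ⊢
        rw [if_pos hy]; linarith
    calc ‖(b x y : ℂ) * ((g x - o x y * g y) * (starRingEnd ℂ) (h x - o x y * h y))‖
        ≤ b x y * K := hnorm
      _ = K * (b x y * 1) := by ring
      _ ≤ K * (b x y * (χ x + χ y)) := by
          apply mul_le_mul_of_nonneg_left _ hK0
          exact mul_le_mul_of_nonneg_left hχ1 (hb0 x y)
      _ = K * (b x y * χ x) + K * (b x y * χ y) := by ring
  · push_neg at hxy
    obtain ⟨hx, hy⟩ := hxy
    have hgx : g x = 0 := by
      by_contra h0
      exact hx (Finset.mem_union_left _ (hg.mem_toFinset.2 h0))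
    have hgy : g y = 0 := by
      by_contra h0
      exact hy (Finset.mem_union_left _ (hg.mem_toFinset.2 h0))
    simp only [hgx, hgy, mul_zero, zero_sub, sub_zero]
    rw [zero_mul, mul_zero, norm_zero]
    nlinarith [mul_nonneg hK0 (mul_nonneg (hb0 x y) (hχ0 x)), mul_nonneg hK0 (mul_nonneg (hb0 x y) (hχ0 y))]

/-- The sesquilinear form of a magnetic Schrödinger graph:
`q(f,g) = (1/2)∑_{x,y} b(x,y)(f(x) − o(x,y)f(y))·conj(g(x) − o(x,y)g(y))
          + ∑_x c(x) f(x)·conj(g(x))`. -/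
noncomputable def qForm {X : Type*} (b : X → X → ℝ) (o : X → X → ℂ) (c : X → ℝ)
    (f g : X → ℂ) : ℂ :=
  (1 / 2 : ℂ) * ∑' z : X × X, (b z.1 z.2 : ℂ) *
      ((f z.1 - o z.1 z.2 * f z.2) * (starRingEnd ℂ) (g z.1 - o z.1 z.2 * g z.2)) +
    ∑' x, (c x : ℂ) * (f x * (starRingEnd ℂ) (g x))

/-- For a graph `b` over `(X,m)`, magnetic potential `o` and nonnegative
potential `c`, every finitely supported `f` and `p ∈ [1,∞)` satisfy
`Re q(f, f·|f|^{p−2}) ≥ (4(p−1)/p²)·q(f·|f|^{(p−2)/2}, f·|f|^{(p−2)/2})`. -/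
theorem stmt1 {X : Type*} [Countable X]
    (m : X → ℝ) (hm : ∀ x, 0 < m x)
    (b : X → X → ℝ) (hb0 : ∀ x y, 0 ≤ b x y) (hbsymm : ∀ x y, b x y = b y x)
    (hbdiag : ∀ x, b x x = 0) (hbsum : ∀ x, Summable fun y => b x y)
    (o : X → X → ℂ) (ho1 : ∀ x y, ‖o x y‖ = 1)
    (hosymm : ∀ x y, o x y = starRingEnd ℂ (o y x))
    (c : X → ℝ) (hc : ∀ x, 0 ≤ c x)
    (f : X → ℂ) (hf : (Function.support f).Finite)
    (p : ℝ) (hp : 1 ≤ p) :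
    4 * (p - 1) / p ^ 2 *
        (qForm b o c (fun x => f x * ((‖f x‖ ^ ((p - 2) / 2) : ℝ) : ℂ))
          (fun x => f x * ((‖f x‖ ^ ((p - 2) / 2) : ℝ) : ℂ))).re ≤
      (qForm b o c f (fun x => f x * ((‖f x‖ ^ (p - 2) : ℝ) : ℂ))).re := by
  classical
  set κ := 4 * (p - 1) / p ^ 2 with hκ
  set ψ : X → ℂ := fun x => f x * ((‖f x‖ ^ ((p - 2) / 2) : ℝ) : ℂ) with hψ
  set φ : X → ℂ := fun x => f x * ((‖f x‖ ^ (p - 2) : ℝ) : ℂ) with hφ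
  have hψf : (Function.support ψ).Finite := hf.subset fun x hx => by
    simp only [Function.mem_support, hψ] at hx ⊢
    intro h0; exact hx (by rw [h0, zero_mul])
  have hφf : (Function.support φ).Finite := hf.subset fun x hx => by
    simp only [Function.mem_support, hφ] at hx ⊢
    intro h0; exact hx (by rw [h0, zero_mul])
  have hS1 := summable_main b hb0 hbsymm hbsum o ho1 ψ ψ hψf hψf
  have hS2 := summable_main b hb0 hbsymm hbsum o ho1 f φ hf hφf
  have hC1 : Summable (fun x => (c x : ℂ) * (ψ x * (starRingEnd ℂ) (ψ x))) := by
    apply summable_of_ne_finset_zero (s := hf.toFinset)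
    intro x hx
    have hfx : f x = 0 := by
      by_contra h0
      exact hx (hf.mem_toFinset.2 h0)
    simp [hψ, hfx]
  have hC2 : Summable (fun x => (c x : ℂ) * (f x * (starRingEnd ℂ) (φ x))) := by
    apply summable_of_ne_finset_zero (s := hf.toFinset)
    intro x hx
    have hfx : f x = 0 := by
      by_contra h0
      exact hx (hf.mem_toFinset.2 h0)
    simp [hφ, hfx]
  have half : (1 / 2 : ℂ) = ((1 / 2 : ℝ) : ℂ) := by norm_num
  rw [qForm, qForm, Complex.add_re, Complex.add_re, half, Complex.re_ofReal_mul,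
    Complex.re_ofReal_mul, Complex.re_tsum hS1, Complex.re_tsum hS2,
    Complex.re_tsum hC1, Complex.re_tsum hC2]
  have hbpart : κ * ∑' z : X × X, ((b z.1 z.2 : ℂ) *
      ((ψ z.1 - o z.1 z.2 * ψ z.2) * (starRingEnd ℂ) (ψ z.1 - o z.1 z.2 * ψ z.2))).re
      ≤ ∑' z : X × X, ((b z.1 z.2 : ℂ) *
      ((f z.1 - o z.1 z.2 * f z.2) * (starRingEnd ℂ) (φ z.1 - o z.1 z.2 * φ z.2))).re := by
    rw [← tsum_mul_left]
    apply Summable.tsum_le_tsum _ ((Complex.hasSum_re hS1.hasSum).summable.mul_left κ)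
      (Complex.hasSum_re hS2.hasSum).summable
    intro z
    rw [Complex.re_ofReal_mul, Complex.re_ofReal_mul]
    have hpt := cplx_ptwise p hp (f z.1) (f z.2) (o z.1 z.2) (ho1 z.1 z.2)
    calc κ * (b z.1 z.2 * ((ψ z.1 - o z.1 z.2 * ψ z.2) *
            (starRingEnd ℂ) (ψ z.1 - o z.1 z.2 * ψ z.2)).re)
        = b z.1 z.2 * (κ * ((ψ z.1 - o z.1 z.2 * ψ z.2) *
            (starRingEnd ℂ) (ψ z.1 - o z.1 z.2 * ψ z.2)).re) := by ring
      _ ≤ b z.1 z.2 * (((f z.1 - o z.1 z.2 * f z.2) *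
            (starRingEnd ℂ) (φ z.1 - o z.1 z.2 * φ z.2)).re) := by
          apply mul_le_mul_of_nonneg_left _ (hb0 z.1 z.2)
          exact hpt
  have hcpart : κ * ∑' x, ((c x : ℂ) * (ψ x * (starRingEnd ℂ) (ψ x))).re
      ≤ ∑' x, ((c x : ℂ) * (f x * (starRingEnd ℂ) (φ x))).re := by
    rw [← tsum_mul_left]
    apply Summable.tsum_le_tsum _ ((Complex.hasSum_re hC1.hasSum).summable.mul_left κ)
      (Complex.hasSum_re hC2.hasSum).summable
    intro x
    exact c_ptwise p hp (c x) (hc x) (f x)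
  have h1 := (Complex.hasSum_re hS1.hasSum).summable
  linarith [hbpart, hcpart]
end

section
/- Let X be a countable set with m : X → (0,∞) and a pseudometric d, and suppose there are C > 0 and ν > 0 such that m(B_r(x)) ≤ C·e^{νr}·m(x) for all x ∈ X and r > 0. Then for every β₀ > (3/2)ν there is a constant C' > 0 such that for all β ≥ β₀ and all x ∈ X, the sum ∑_{y∈X} √(m(y)/m(x))·e^{−β·d(x,y)} converges and is at most C'. -/
/-- Under uniform exponential volume growth with rate `ν`, for every
`β₀ > (3/2)ν` there is `C' > 0` such that for all `β ≥ β₀` and all `x`,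
`∑_y √(m(y)/m(x))·e^{−β·d(x,y)}` converges and is at most `C'`. -/
theorem stmt9 {X : Type*} [Countable X]
    (m : X → ℝ) (hm : ∀ x, 0 < m x)
    (d : X → X → ℝ) (hd_self : ∀ x, d x x = 0)
    (hd_symm : ∀ x y, d x y = d y x)
    (hd_tri : ∀ x y z, d x z ≤ d x y + d y z)
    (C ν : ℝ) (hC : 0 < C) (hν : 0 < ν)
    (hvol : ∀ (x : X) (r : ℝ), 0 < r →
      (∑' y : {y : X // d x y ≤ r}, ENNReal.ofReal (m y)) ≤
        ENNReal.ofReal (C * Real.exp (ν * r) * m x)) :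
    ∀ β₀ : ℝ, 3 / 2 * ν < β₀ →
      ∃ C' > 0, ∀ β : ℝ, β₀ ≤ β → ∀ x : X,
        Summable (fun y => Real.sqrt (m y / m x) * Real.exp (-β * d x y)) ∧
          (∑' y, Real.sqrt (m y / m x) * Real.exp (-β * d x y)) ≤ C' := by
  intro β₀ hβ₀
  have hd0 : ∀ x y, 0 ≤ d x y := by
    intro x y
    nlinarith [hd_tri x y x, hd_self x, hd_symm x y]
  -- single-point mass bound
  have hpt : ∀ x y : X, m y ≤ C * Real.exp (ν * d x y) * m x := by
    intro x y
    have key : ∀ ε ∈ Set.Ioi (0:ℝ), m y ≤ C * Real.exp (ν * (d x y + ε)) * m x := by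
      intro ε hε
      have hε' : (0:ℝ) < ε := hε
      have hr : 0 < d x y + ε := by have := hd0 x y; linarith
      have hy : d x y ≤ d x y + ε := by linarith
      have h1 : ENNReal.ofReal (m y) ≤
          ∑' y' : {y' : X // d x y' ≤ d x y + ε}, ENNReal.ofReal (m y') :=
        ENNReal.le_tsum (⟨y, hy⟩ : {y' : X // d x y' ≤ d x y + ε})
      have h2 := h1.trans (hvol x (d x y + ε) hr)
      rwa [ENNReal.ofReal_le_ofReal_iff (mul_nonneg (mul_nonneg hC.le (Real.exp_nonneg _)) (hm x).le)] at h2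
    have hlim : Filter.Tendsto (fun ε : ℝ => C * Real.exp (ν * (d x y + ε)) * m x)
        (nhdsWithin 0 (Set.Ioi 0)) (nhds (C * Real.exp (ν * d x y) * m x)) := by
      have hc : Continuous (fun ε : ℝ => C * Real.exp (ν * (d x y + ε)) * m x) := by
        continuity
      have h0 : Filter.Tendsto (fun ε : ℝ => C * Real.exp (ν * (d x y + ε)) * m x)
          (nhds 0) (nhds (C * Real.exp (ν * (d x y + 0)) * m x)) := hc.tendsto 0
      rw [add_zero] at h0
      exact h0.mono_left nhdsWithin_le_nhds
    exact ge_of_tendsto hlim (Filter.eventually_of_mem self_mem_nhdsWithin key)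
  set γ : ℝ := β₀ - ν / 2 with hγdef
  have hγν : ν < γ := by simp only [hγdef]; linarith
  have hγ0 : 0 < γ := lt_trans hν hγν
  have hq1 : Real.exp (ν - γ) < 1 := by
    rw [Real.exp_lt_one_iff]; linarith
  have hq0 : (0:ℝ) < 1 - Real.exp (ν - γ) := by linarith
  set K : ℝ := C * Real.exp ν * (1 - Real.exp (ν - γ))⁻¹ with hK
  have hKpos : 0 < K := by positivity
  refine ⟨Real.sqrt C * K, mul_pos (Real.sqrt_pos.mpr hC) hKpos, ?_⟩
  intro β hβ x
  -- main weighted volume estimate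
  have hmain : ∑' y : X, ENNReal.ofReal (m y * Real.exp (-γ * d x y)) ≤
      ENNReal.ofReal (K * m x) := by
    have hsplit : ∀ y : X, ENNReal.ofReal (m y * Real.exp (-γ * d x y)) =
        ∑' n : ℕ, (if ⌊d x y⌋₊ = n then ENNReal.ofReal (m y * Real.exp (-γ * d x y)) else 0) := by
      intro y
      rw [tsum_eq_single ⌊d x y⌋₊]
      · simp
      · intro n hn
        simp [Ne.symm hn]
    calc ∑' y : X, ENNReal.ofReal (m y * Real.exp (-γ * d x y))
        = ∑' (y : X) (n : ℕ),
            (if ⌊d x y⌋₊ = n then ENNReal.ofReal (m y * Real.exp (-γ * d x y)) else 0) :=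
          tsum_congr hsplit
      _ = ∑' (n : ℕ) (y : X),
            (if ⌊d x y⌋₊ = n then ENNReal.ofReal (m y * Real.exp (-γ * d x y)) else 0) :=
          ENNReal.tsum_comm
      _ ≤ ∑' n : ℕ, ENNReal.ofReal (C * Real.exp ν * m x) * ENNReal.ofReal (Real.exp (ν - γ)) ^ n := by
          refine ENNReal.tsum_le_tsum fun n => ?_
          have step1 : (∑' y : X,
              (if ⌊d x y⌋₊ = n then ENNReal.ofReal (m y * Real.exp (-γ * d x y)) else 0)) ≤
              ∑' y : X, (if d x y ≤ (n:ℝ) + 1 then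
                ENNReal.ofReal (Real.exp (-γ * n) * m y) else 0) := by
            refine ENNReal.tsum_le_tsum fun y => ?_
            by_cases h : ⌊d x y⌋₊ = n
            · have hdn : (n:ℝ) ≤ d x y := by
                rw [← h]; exact Nat.floor_le (hd0 x y)
              have hdn1 : d x y ≤ (n:ℝ) + 1 := by
                have := Nat.lt_floor_add_one (d x y)
                rw [h] at this
                exact this.le
              rw [if_pos h, if_pos hdn1]
              apply ENNReal.ofReal_le_ofReal
              rw [mul_comm (Real.exp (-γ * n)) (m y)]
              apply mul_le_mul_of_nonneg_left _ (hm y).le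
              apply Real.exp_le_exp.mpr
              nlinarith
            · rw [if_neg h]
              exact zero_le
          have step2 : (∑' y : X, (if d x y ≤ (n:ℝ) + 1 then
                ENNReal.ofReal (Real.exp (-γ * n) * m y) else 0)) =
              ENNReal.ofReal (Real.exp (-γ * n)) *
                ∑' y : {y : X // d x y ≤ (n:ℝ) + 1}, ENNReal.ofReal (m y) := by
            have e1 : (∑' y : {y : X // d x y ≤ (n:ℝ) + 1}, ENNReal.ofReal (m y)) =
                ∑' y : X, Set.indicator {y : X | d x y ≤ (n:ℝ) + 1}
                  (fun y => ENNReal.ofReal (m y)) y :=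
              tsum_subtype {y : X | d x y ≤ (n:ℝ) + 1} (fun y => ENNReal.ofReal (m y))
            rw [e1, ← ENNReal.tsum_mul_left]
            refine tsum_congr fun y => ?_
            by_cases h : d x y ≤ (n:ℝ) + 1
            · simp [Set.indicator, Set.mem_setOf_eq, h, ENNReal.ofReal_mul (Real.exp_nonneg _)]
            · simp [Set.indicator, Set.mem_setOf_eq, h]
          have step3 : ENNReal.ofReal (Real.exp (-γ * n)) *
                (∑' y : {y : X // d x y ≤ (n:ℝ) + 1}, ENNReal.ofReal (m y)) ≤
              ENNReal.ofReal (Real.exp (-γ * n)) *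
                ENNReal.ofReal (C * Real.exp (ν * ((n:ℝ) + 1)) * m x) :=
            mul_le_mul_right (hvol x ((n:ℝ) + 1) (by positivity)) _
          have step4 : ENNReal.ofReal (Real.exp (-γ * n)) *
                ENNReal.ofReal (C * Real.exp (ν * ((n:ℝ) + 1)) * m x) =
              ENNReal.ofReal (C * Real.exp ν * m x) * ENNReal.ofReal (Real.exp (ν - γ)) ^ n := by
            rw [← ENNReal.ofReal_mul (Real.exp_nonneg _),
              ← ENNReal.ofReal_pow (Real.exp_nonneg _),
              ← ENNReal.ofReal_mul (mul_nonneg (mul_nonneg hC.le (Real.exp_nonneg _)) (hm x).le)]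
            congr 1
            rw [← Real.exp_nat_mul]
            rw [show C * Real.exp ν * m x * Real.exp (↑n * (ν - γ)) =
              C * m x * (Real.exp ν * Real.exp (↑n * (ν - γ))) by ring,
              ← Real.exp_add]
            rw [show Real.exp (-γ * ↑n) * (C * Real.exp (ν * (↑n + 1)) * m x) =
              C * m x * (Real.exp (-γ * ↑n) * Real.exp (ν * (↑n + 1))) by ring,
              ← Real.exp_add]
            congr 2
            ring
          calc (∑' y : X,
              (if ⌊d x y⌋₊ = n then ENNReal.ofReal (m y * Real.exp (-γ * d x y)) else 0))
              ≤ _ := step1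
            _ = _ := step2
            _ ≤ _ := step3
            _ = _ := step4
      _ = ENNReal.ofReal (C * Real.exp ν * m x) * (1 - ENNReal.ofReal (Real.exp (ν - γ)))⁻¹ := by
          rw [ENNReal.tsum_mul_left, ENNReal.tsum_geometric]
      _ = ENNReal.ofReal (K * m x) := by
          rw [show (1 : ENNReal) - ENNReal.ofReal (Real.exp (ν - γ)) =
              ENNReal.ofReal (1 - Real.exp (ν - γ)) by
            rw [ENNReal.ofReal_sub _ (Real.exp_nonneg _), ENNReal.ofReal_one]]
          rw [← ENNReal.ofReal_inv_of_pos hq0, ← ENNReal.ofReal_mul (mul_nonneg (mul_nonneg hC.le (Real.exp_nonneg _)) (hm x).le)]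
          congr 1
          simp only [hK]
          ring
  -- pointwise bound
  have hpw : ∀ y : X, Real.sqrt (m y / m x) * Real.exp (-β * d x y) ≤
      (Real.sqrt C / m x) * (m y * Real.exp (-γ * d x y)) := by
    intro y
    have ht : 0 ≤ d x y := hd0 x y
    have hb : m x ≤ C * Real.exp (ν * d x y) * m y := by
      have := hpt y x
      rwa [hd_symm y x] at this
    have hse : Real.sqrt (Real.exp (ν * d x y)) = Real.exp (ν * d x y / 2) := by
      rw [show Real.exp (ν * d x y) = Real.exp (ν * d x y / 2) ^ 2 by
        rw [sq, ← Real.exp_add]; ring_nf]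
      exact Real.sqrt_sq (Real.exp_nonneg _)
    have hid : Real.sqrt (m y / m x) = (m y / m x) * Real.sqrt (m x / m y) := by
      have hnn2 : (0:ℝ) ≤ (m y / m x) * Real.sqrt (m x / m y) :=
        mul_nonneg (div_nonneg (hm y).le (hm x).le) (Real.sqrt_nonneg _)
      rw [← Real.sqrt_sq hnn2]
      congr 1
      rw [mul_pow, Real.sq_sqrt (div_nonneg (hm x).le (hm y).le)]
      field_simp [(hm x).ne', (hm y).ne']
    have h3 : Real.sqrt (m x / m y) ≤ Real.sqrt C * Real.exp (ν * d x y / 2) := by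
      have hdd : m x / m y ≤ C * Real.exp (ν * d x y) := by
        rw [div_le_iff₀ (hm y)]
        linarith [hb]
      calc Real.sqrt (m x / m y) ≤ Real.sqrt (C * Real.exp (ν * d x y)) :=
            Real.sqrt_le_sqrt hdd
        _ = Real.sqrt C * Real.exp (ν * d x y / 2) := by rw [Real.sqrt_mul hC.le, hse]
    have h1 : Real.sqrt (m y / m x) ≤
        Real.sqrt C * Real.exp (ν * d x y / 2) * (m y / m x) := by
      rw [hid]
      calc (m y / m x) * Real.sqrt (m x / m y)
          ≤ (m y / m x) * (Real.sqrt C * Real.exp (ν * d x y / 2)) :=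
            mul_le_mul_of_nonneg_left h3 (div_nonneg (hm y).le (hm x).le)
        _ = Real.sqrt C * Real.exp (ν * d x y / 2) * (m y / m x) := by ring
    calc Real.sqrt (m y / m x) * Real.exp (-β * d x y)
        ≤ (Real.sqrt C * Real.exp (ν * d x y / 2) * (m y / m x)) * Real.exp (-β * d x y) :=
          mul_le_mul_of_nonneg_right h1 (Real.exp_nonneg _)
      _ = (Real.sqrt C / m x) * m y * (Real.exp (ν * d x y / 2) * Real.exp (-β * d x y)) := by
          field_simp
      _ ≤ (Real.sqrt C / m x) * m y * Real.exp (-γ * d x y) := by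
          apply mul_le_mul_of_nonneg_left
          · rw [← Real.exp_add, Real.exp_le_exp]
            simp only [hγdef]
            nlinarith
          · exact mul_nonneg (div_nonneg (Real.sqrt_nonneg _) (hm x).le) (hm y).le
      _ = (Real.sqrt C / m x) * (m y * Real.exp (-γ * d x y)) := by ring
  -- assemble
  have hbound : ∑' y : X, ENNReal.ofReal (Real.sqrt (m y / m x) * Real.exp (-β * d x y)) ≤
      ENNReal.ofReal (Real.sqrt C * K) := by
    calc ∑' y : X, ENNReal.ofReal (Real.sqrt (m y / m x) * Real.exp (-β * d x y))
        ≤ ∑' y : X, ENNReal.ofReal ((Real.sqrt C / m x) * (m y * Real.exp (-γ * d x y))) :=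
          ENNReal.tsum_le_tsum fun y => ENNReal.ofReal_le_ofReal (hpw y)
      _ = ENNReal.ofReal (Real.sqrt C / m x) *
            ∑' y : X, ENNReal.ofReal (m y * Real.exp (-γ * d x y)) := by
          rw [← ENNReal.tsum_mul_left]
          exact tsum_congr fun y => ENNReal.ofReal_mul (div_nonneg (Real.sqrt_nonneg _) (hm x).le)
      _ ≤ ENNReal.ofReal (Real.sqrt C / m x) * ENNReal.ofReal (K * m x) :=
          mul_le_mul_right hmain _
      _ = ENNReal.ofReal (Real.sqrt C * K) := by
          rw [← ENNReal.ofReal_mul (div_nonneg (Real.sqrt_nonneg _) (hm x).le)]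
          congr 1
          field_simp [(hm x).ne']
  have hfin : ∑' y : X, ENNReal.ofReal (Real.sqrt (m y / m x) * Real.exp (-β * d x y)) ≠ ⊤ :=
    ne_top_of_le_ne_top ENNReal.ofReal_ne_top hbound
  have hnn : ∀ y : X, 0 ≤ Real.sqrt (m y / m x) * Real.exp (-β * d x y) := fun y => by positivity
  have hsummable : Summable (fun y => Real.sqrt (m y / m x) * Real.exp (-β * d x y)) := by
    have h := ENNReal.summable_toReal hfin
    have he : (fun y : X => (ENNReal.ofReal (Real.sqrt (m y / m x) * Real.exp (-β * d x y))).toReal) =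
        fun y : X => Real.sqrt (m y / m x) * Real.exp (-β * d x y) :=
      funext fun y => ENNReal.toReal_ofReal (hnn y)
    rwa [he] at h
  refine ⟨hsummable, ?_⟩
  have heq : (∑' y : X, Real.sqrt (m y / m x) * Real.exp (-β * d x y)) =
      (∑' y : X, ENNReal.ofReal (Real.sqrt (m y / m x) * Real.exp (-β * d x y))).toReal := by
    rw [ENNReal.tsum_toReal_eq (fun y => ENNReal.ofReal_ne_top)]
    exact tsum_congr fun y => (ENNReal.toReal_ofReal (hnn y)).symm
  rw [heq]
  calc (∑' y : X, ENNReal.ofReal (Real.sqrt (m y / m x) * Real.exp (-β * d x y))).toReal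
      ≤ (ENNReal.ofReal (Real.sqrt C * K)).toReal :=
        ENNReal.toReal_mono ENNReal.ofReal_ne_top hbound
    _ = Real.sqrt C * K := ENNReal.toReal_ofReal (mul_nonneg (Real.sqrt_nonneg _) hKpos.le)
end

section
/- Let X be a countable set with m : X → (0,∞) and a pseudometric d, and suppose there are C > 0 and ν > 0 with m(B_r(x)) ≤ C·e^{νr}·m(x) for all x ∈ X, r > 0. Let β > (3/2)ν and let k : X×X → ℂ satisfy |k(x,y)| ≤ (m(x)·m(y))^{−1/2}·e^{−β·d(x,y)} for all x,y. Then there exists C' > 0 (depending only on C, ν, β) such that for every f : X → ℂ with ∑_{y∈X} m(y)|f(y)| < ∞, one has ∑_{x∈X} m(x)·|∑_{y∈X} m(y)·k(x,y)·f(y)| ≤ C'·∑_{y∈X} m(y)|f(y)|, all sums converging absolutely. -/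
open Real Filter

private lemma sqrt_exp' (x : ℝ) : Real.sqrt (Real.exp x) = Real.exp (x/2) := by
  rw [show x = x/2 + x/2 by ring, Real.exp_add, Real.sqrt_mul_self (Real.exp_nonneg _)]
  ring_nf

private lemma geom_ofReal (c q : ℝ) (hc : 0 ≤ c) (hq0 : 0 ≤ q) (hq1 : q < 1) :
    ∑' n : ℕ, ENNReal.ofReal (c * q ^ n) = ENNReal.ofReal (c * (1 - q)⁻¹) := by
  rw [← ENNReal.ofReal_tsum_of_nonneg (fun n => mul_nonneg hc (pow_nonneg hq0 n))
    ((summable_geometric_of_lt_one hq0 hq1).mul_left c), tsum_mul_left,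
    tsum_geometric_of_lt_one hq0 hq1]

/-- If the weighted space has uniform exponential volume growth with rate
`ν` and a kernel `k` satisfies `|k(x,y)| ≤ (m(x)m(y))^{−1/2}·e^{−β·d(x,y)}` for some
`β > (3/2)ν`, then the associated integral operator is bounded on the weighted `ℓ¹` space,
with a norm bound `C'` depending only on `C`, `ν`, `β`. -/
theorem stmt10 {X : Type*} [Countable X] (C ν β : ℝ) (hC : 0 < C) (hν : 0 < ν)
    (hβ : 3 / 2 * ν < β) :
    ∃ C' > 0, ∀ m : X → ℝ, (∀ x, 0 < m x) →
      ∀ d : X → X → ℝ, (∀ x, d x x = 0) → (∀ x y, d x y = d y x) →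
        (∀ x y z, d x z ≤ d x y + d y z) →
      (∀ (x : X) (r : ℝ), 0 < r →
        (∑' y : {y : X // d x y ≤ r}, ENNReal.ofReal (m y)) ≤
          ENNReal.ofReal (C * Real.exp (ν * r) * m x)) →
      ∀ k : X → X → ℂ,
        (∀ x y, ‖k x y‖ ≤ Real.exp (-β * d x y) / Real.sqrt (m x * m y)) →
      ∀ f : X → ℂ, Summable (fun y => m y * ‖f y‖) →
        (∀ x, Summable (fun y => m y * ‖k x y * f y‖)) ∧
        Summable (fun x => m x * ‖∑' y, (m y : ℂ) * k x y * f y‖) ∧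
        (∑' x, m x * ‖∑' y, (m y : ℂ) * k x y * f y‖) ≤
          C' * ∑' y, m y * ‖f y‖ := by
  set α : ℝ := β - ν / 2 with hαdef
  have hνα : ν < α := by simp only [hαdef]; linarith
  have hα0 : 0 < α := by linarith
  set q : ℝ := Real.exp (ν - α) with hqdef
  have hq0 : 0 < q := Real.exp_pos _
  have hq1 : q < 1 := Real.exp_lt_one_iff.mpr (by linarith)
  set K : ℝ := C * Real.exp ν * (1 - q)⁻¹ with hKdef
  have hK0 : 0 < K := by
    apply mul_pos (mul_pos hC (Real.exp_pos _))
    exact inv_pos.mpr (by linarith)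
  refine ⟨Real.sqrt C * K, mul_pos (Real.sqrt_pos.mpr hC) hK0, ?_⟩
  intro m hm d hd0 hdsymm hdtri hball k hk f hf
  have hdnn : ∀ x y, 0 ≤ d x y := by
    intro x y
    have h1 := hdtri x y x
    have h2 := hdsymm x y
    have h3 := hd0 x
    nlinarith
  -- Lemma A: m x ≤ C e^{ν d y x} m y
  have hA : ∀ x y : X, m x ≤ C * Real.exp (ν * d y x) * m y := by
    intro x y
    have key : ∀ ε > (0:ℝ), m x ≤ C * Real.exp (ν * (d y x + ε)) * m y := by
      intro ε hε
      have h1 : ENNReal.ofReal (m x) ≤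
          ∑' z : {z : X // d y z ≤ d y x + ε}, ENNReal.ofReal (m z) :=
        ENNReal.le_tsum (⟨x, by linarith⟩ : {z : X // d y z ≤ d y x + ε})
      have h2 := hball y (d y x + ε) (by have := hdnn y x; linarith)
      have h3 := h1.trans h2
      rwa [ENNReal.ofReal_le_ofReal_iff
        (mul_nonneg (mul_nonneg hC.le (Real.exp_nonneg _)) (hm y).le)] at h3
    have cont : Tendsto (fun ε : ℝ => C * Real.exp (ν * (d y x + ε)) * m y)
        (nhdsWithin 0 (Set.Ioi 0)) (nhds (C * Real.exp (ν * (d y x + 0)) * m y)) := by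
      apply Tendsto.mono_left _ nhdsWithin_le_nhds
      exact (Continuous.tendsto (by continuity) 0)
    have := ge_of_tendsto cont (eventually_mem_nhdsWithin.mono (fun ε hε => key ε hε))
    simpa using this
  -- Lemma B: weighted exponential sum bound
  have hB : ∀ y : X, ∑' x : X, ENNReal.ofReal (m x * Real.exp (-α * d y x)) ≤
      ENNReal.ofReal (K * m y) := by
    intro y
    have hsig : ∑' x : X, ENNReal.ofReal (m x * Real.exp (-α * d y x)) =
        ∑' (n : ℕ) (x : {x : X // ⌊d y x⌋₊ = n}),
          ENNReal.ofReal (m x * Real.exp (-α * d y x)) := by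
      rw [← (Equiv.sigmaFiberEquiv fun x : X => ⌊d y x⌋₊).tsum_eq
        (fun x => ENNReal.ofReal (m x * Real.exp (-α * d y x)))]
      exact ENNReal.tsum_sigma' _
    rw [hsig]
    have step : ∀ n : ℕ, (∑' x : {x : X // ⌊d y x⌋₊ = n},
        ENNReal.ofReal (m x * Real.exp (-α * d y x))) ≤
        ENNReal.ofReal (C * Real.exp ν * m y * q ^ n) := by
      intro n
      have h1 : (∑' x : {x : X // ⌊d y x⌋₊ = n},
          ENNReal.ofReal (m x * Real.exp (-α * d y x))) ≤
          ∑' x : {x : X // ⌊d y x⌋₊ = n},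
            ENNReal.ofReal (Real.exp (-α * (n:ℝ)) * m x) := by
        apply ENNReal.tsum_le_tsum
        rintro ⟨z, rfl⟩
        apply ENNReal.ofReal_le_ofReal
        rw [mul_comm (Real.exp _)]
        apply mul_le_mul_of_nonneg_left _ (hm _).le
        apply Real.exp_le_exp.mpr
        have : ((⌊d y z⌋₊ : ℕ) : ℝ) ≤ d y z := Nat.floor_le (hdnn y z)
        nlinarith
      have h2 : (∑' x : {x : X // ⌊d y x⌋₊ = n}, ENNReal.ofReal (m x)) ≤
          ∑' x : {x : X // d y x ≤ (n : ℝ) + 1}, ENNReal.ofReal (m x) := by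
        have e1 : (∑' x : {x : X // ⌊d y x⌋₊ = n}, ENNReal.ofReal (m x)) =
            ∑' x : X, Set.indicator {x : X | ⌊d y x⌋₊ = n}
              (fun z => ENNReal.ofReal (m z)) x :=
          tsum_subtype {x : X | ⌊d y x⌋₊ = n} (fun z => ENNReal.ofReal (m z))
        have e2 : (∑' x : {x : X // d y x ≤ (n : ℝ) + 1}, ENNReal.ofReal (m x)) =
            ∑' x : X, Set.indicator {x : X | d y x ≤ (n : ℝ) + 1}
              (fun z => ENNReal.ofReal (m z)) x :=
          tsum_subtype {x : X | d y x ≤ (n : ℝ) + 1} (fun z => ENNReal.ofReal (m z))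
        rw [e1, e2]
        apply ENNReal.tsum_le_tsum
        intro x
        apply Set.indicator_le_indicator_of_subset
        · intro z hz
          simp only [Set.mem_setOf_eq] at hz ⊢
          have := Nat.lt_floor_add_one (d y z)
          rw [hz] at this
          linarith
        · intro z; exact zero_le
      have h3 := (h2.trans (hball y ((n : ℝ) + 1) (by positivity)))
      calc (∑' x : {x : X // ⌊d y x⌋₊ = n},
            ENNReal.ofReal (m x * Real.exp (-α * d y x)))
          ≤ ∑' x : {x : X // ⌊d y x⌋₊ = n},
            ENNReal.ofReal (Real.exp (-α * (n:ℝ)) * m x) := h1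
        _ = ENNReal.ofReal (Real.exp (-α * (n:ℝ))) *
            ∑' x : {x : X // ⌊d y x⌋₊ = n}, ENNReal.ofReal (m x) := by
            rw [← ENNReal.tsum_mul_left]
            congr 1; ext x
            rw [ENNReal.ofReal_mul (Real.exp_nonneg _)]
        _ ≤ ENNReal.ofReal (Real.exp (-α * (n:ℝ))) *
            ENNReal.ofReal (C * Real.exp (ν * ((n:ℝ) + 1)) * m y) := by
            exact mul_le_mul_right h3 _
        _ = ENNReal.ofReal (C * Real.exp ν * m y * q ^ n) := by
            rw [← ENNReal.ofReal_mul (Real.exp_nonneg _)]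
            congr 1
            calc Real.exp (-α * (n:ℝ)) * (C * Real.exp (ν * ((n:ℝ) + 1)) * m y)
                = C * m y * (Real.exp (-α * (n:ℝ)) * Real.exp (ν * ((n:ℝ) + 1))) := by
                  ring
              _ = C * m y * Real.exp (-α * (n:ℝ) + ν * ((n:ℝ) + 1)) := by
                  rw [← Real.exp_add]
              _ = C * m y * (Real.exp ν * Real.exp ((n:ℝ) * (ν - α))) := by
                  rw [← Real.exp_add]
                  congr 1
                  ring
              _ = C * Real.exp ν * m y * q ^ n := by
                  rw [hqdef, ← Real.exp_nat_mul]
                  ring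
    calc (∑' (n : ℕ) (x : {x : X // ⌊d y x⌋₊ = n}),
          ENNReal.ofReal (m x * Real.exp (-α * d y x)))
        ≤ ∑' n : ℕ, ENNReal.ofReal (C * Real.exp ν * m y * q ^ n) :=
          ENNReal.tsum_le_tsum step
      _ = ENNReal.ofReal (C * Real.exp ν * m y * (1 - q)⁻¹) :=
          geom_ofReal _ _ (mul_nonneg (mul_nonneg hC.le (Real.exp_nonneg _)) (hm y).le)
            hq0.le hq1
      _ = ENNReal.ofReal (K * m y) := by
          congr 1
          rw [hKdef]
          ring
  -- core pointwise estimate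
  have hcore : ∀ x y : X, m y * Real.exp (-β * d x y) / Real.sqrt (m x * m y) ≤
      Real.sqrt C * Real.exp (-α * d x y) := by
    intro x y
    have hmx := hm x
    have hmy := hm y
    have h1 : Real.sqrt (m x * m y) = Real.sqrt (m x) * Real.sqrt (m y) :=
      Real.sqrt_mul hmx.le _
    have h2 : m y / Real.sqrt (m x * m y) = Real.sqrt (m y) / Real.sqrt (m x) := by
      rw [h1, mul_comm, ← div_div, Real.div_sqrt]
    have h3 : Real.sqrt (m y) ≤ Real.sqrt C * Real.exp (ν * d x y / 2) * Real.sqrt (m x) := by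
      have h4 := hA y x
      calc Real.sqrt (m y) ≤ Real.sqrt (C * Real.exp (ν * d x y) * m x) :=
            Real.sqrt_le_sqrt h4
        _ = Real.sqrt C * Real.exp (ν * d x y / 2) * Real.sqrt (m x) := by
            rw [Real.sqrt_mul (by positivity), Real.sqrt_mul hC.le, sqrt_exp']
    calc m y * Real.exp (-β * d x y) / Real.sqrt (m x * m y)
        = (m y / Real.sqrt (m x * m y)) * Real.exp (-β * d x y) := by ring
      _ = (Real.sqrt (m y) / Real.sqrt (m x)) * Real.exp (-β * d x y) := by rw [h2]
      _ ≤ (Real.sqrt C * Real.exp (ν * d x y / 2)) * Real.exp (-β * d x y) := by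
          apply mul_le_mul_of_nonneg_right _ (Real.exp_nonneg _)
          rw [div_le_iff₀ (Real.sqrt_pos.mpr hmx)]
          exact h3
      _ = Real.sqrt C * Real.exp (-α * d x y) := by
          rw [mul_assoc, ← Real.exp_add]
          congr 2
          rw [hαdef]
          ring
  -- first conjunct: summability in y
  have hsum1 : ∀ x, Summable (fun y => m y * ‖k x y * f y‖) := by
    intro x
    apply Summable.of_nonneg_of_le
      (fun y => mul_nonneg (hm y).le (norm_nonneg _))
      (fun y => ?_) (hf.mul_left (Real.sqrt C / m x))
    have key : Real.exp (-β * d x y) / Real.sqrt (m x * m y) ≤ Real.sqrt C / m x := by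
      have h0 : (0:ℝ) < Real.sqrt (m x * m y) :=
        Real.sqrt_pos.mpr (mul_pos (hm x) (hm y))
      have h1 : m x * Real.exp (-β * d y x) / Real.sqrt (m y * m x) ≤ Real.sqrt C := by
        refine (hcore y x).trans ?_
        have : Real.exp (-α * d y x) ≤ 1 :=
          Real.exp_le_one_iff.mpr (by nlinarith [hdnn y x])
        nlinarith [Real.sqrt_nonneg C]
      rw [div_le_iff₀ (Real.sqrt_pos.mpr (mul_pos (hm y) (hm x)))] at h1
      rw [div_le_div_iff₀ h0 (hm x)]
      calc Real.exp (-β * d x y) * m x = m x * Real.exp (-β * d y x) := by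
            rw [hdsymm x y]; ring
        _ ≤ Real.sqrt C * Real.sqrt (m y * m x) := h1
        _ = Real.sqrt C * Real.sqrt (m x * m y) := by rw [mul_comm (m y)]
    calc m y * ‖k x y * f y‖
        = m y * (‖k x y‖ * ‖f y‖) := by rw [norm_mul]
      _ ≤ m y * ((Real.exp (-β * d x y) / Real.sqrt (m x * m y)) * ‖f y‖) := by
          apply mul_le_mul_of_nonneg_left _ (hm y).le
          exact mul_le_mul_of_nonneg_right (hk x y) (norm_nonneg _)
      _ ≤ m y * ((Real.sqrt C / m x) * ‖f y‖) := by
          apply mul_le_mul_of_nonneg_left _ (hm y).le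
          exact mul_le_mul_of_nonneg_right key (norm_nonneg _)
      _ = Real.sqrt C / m x * (m y * ‖f y‖) := by ring
  -- norms
  have habs_eq : ∀ x y : X, ‖(m y : ℂ) * k x y * f y‖ = m y * ‖k x y * f y‖ := by
    intro x y
    rw [mul_assoc, norm_mul, Complex.norm_real, Real.norm_of_nonneg (hm y).le]
  have habs2 : ∀ x, Summable (fun y => ‖(m y : ℂ) * k x y * f y‖) := fun x =>
    (hsum1 x).congr (fun y => (habs_eq x y).symm)
  have hSb : ∀ x, ‖∑' y, (m y : ℂ) * k x y * f y‖ ≤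
      ∑' y, m y * ‖k x y * f y‖ := by
    intro x
    calc ‖∑' y, (m y : ℂ) * k x y * f y‖
        = ‖∑' y, (m y : ℂ) * k x y * f y‖ := rfl
      _ ≤ ∑' y, ‖(m y : ℂ) * k x y * f y‖ := norm_tsum_le_tsum_norm (habs2 x)
      _ = ∑' y, m y * ‖k x y * f y‖ := tsum_congr (habs_eq x)
  -- pointwise bound for the double sum
  have hP : ∀ x y : X, m x * (m y * ‖k x y * f y‖) ≤
      Real.sqrt C * ‖f y‖ * (m x * Real.exp (-α * d y x)) := by
    intro x y
    have h1 : ‖k x y * f y‖ ≤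
        Real.exp (-β * d x y) / Real.sqrt (m x * m y) * ‖f y‖ := by
      rw [norm_mul]
      exact mul_le_mul_of_nonneg_right (hk x y) (norm_nonneg _)
    calc m x * (m y * ‖k x y * f y‖)
        ≤ m x * (m y * (Real.exp (-β * d x y) / Real.sqrt (m x * m y) *
            ‖f y‖)) := by
          apply mul_le_mul_of_nonneg_left _ (hm x).le
          exact mul_le_mul_of_nonneg_left h1 (hm y).le
      _ = (m y * Real.exp (-β * d x y) / Real.sqrt (m x * m y)) *
            (m x * ‖f y‖) := by ring
      _ ≤ (Real.sqrt C * Real.exp (-α * d x y)) * (m x * ‖f y‖) := by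
          apply mul_le_mul_of_nonneg_right (hcore x y)
          exact mul_nonneg (hm x).le (norm_nonneg _)
      _ = Real.sqrt C * ‖f y‖ * (m x * Real.exp (-α * d y x)) := by
          rw [hdsymm x y]; ring
  -- the main ENNReal chain
  have gnn : ∀ x : X, (0:ℝ) ≤ m x * ‖∑' y, (m y : ℂ) * k x y * f y‖ :=
    fun x => mul_nonneg (hm x).le (norm_nonneg _)
  have key : (∑' x, ENNReal.ofReal (m x * ‖∑' y, (m y : ℂ) * k x y * f y‖)) ≤
      ENNReal.ofReal (Real.sqrt C * K * ∑' y, m y * ‖f y‖) := by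
    calc (∑' x, ENNReal.ofReal (m x * ‖∑' y, (m y : ℂ) * k x y * f y‖))
        ≤ ∑' (x : X) (y : X),
            ENNReal.ofReal (m x * (m y * ‖k x y * f y‖)) := by
          apply ENNReal.tsum_le_tsum
          intro x
          calc ENNReal.ofReal (m x * ‖∑' y, (m y : ℂ) * k x y * f y‖)
              ≤ ENNReal.ofReal (m x * ∑' y, m y * ‖k x y * f y‖) :=
                ENNReal.ofReal_le_ofReal
                  (mul_le_mul_of_nonneg_left (hSb x) (hm x).le)
            _ = ENNReal.ofReal (∑' y, m x * (m y * ‖k x y * f y‖)) := by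
                rw [tsum_mul_left]
            _ = ∑' y, ENNReal.ofReal (m x * (m y * ‖k x y * f y‖)) :=
                ENNReal.ofReal_tsum_of_nonneg
                  (fun y => mul_nonneg (hm x).le
                    (mul_nonneg (hm y).le (norm_nonneg _)))
                  ((hsum1 x).mul_left (m x))
      _ ≤ ∑' (x : X) (y : X), ENNReal.ofReal
            (Real.sqrt C * ‖f y‖ * (m x * Real.exp (-α * d y x))) := by
          apply ENNReal.tsum_le_tsum
          intro x
          apply ENNReal.tsum_le_tsum
          intro y
          exact ENNReal.ofReal_le_ofReal (hP x y)
      _ = ∑' (y : X) (x : X), ENNReal.ofReal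
            (Real.sqrt C * ‖f y‖ * (m x * Real.exp (-α * d y x))) :=
          ENNReal.tsum_comm
      _ ≤ ∑' (y : X), ENNReal.ofReal (Real.sqrt C * ‖f y‖) *
            ENNReal.ofReal (K * m y) := by
          apply ENNReal.tsum_le_tsum
          intro y
          calc (∑' x : X, ENNReal.ofReal
                (Real.sqrt C * ‖f y‖ * (m x * Real.exp (-α * d y x))))
              = ENNReal.ofReal (Real.sqrt C * ‖f y‖) *
                  ∑' x : X, ENNReal.ofReal (m x * Real.exp (-α * d y x)) := by
                rw [← ENNReal.tsum_mul_left]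
                congr 1
                ext x
                rw [← ENNReal.ofReal_mul
                  (mul_nonneg (Real.sqrt_nonneg _) (norm_nonneg _))]
            _ ≤ ENNReal.ofReal (Real.sqrt C * ‖f y‖) *
                  ENNReal.ofReal (K * m y) := mul_le_mul_right (hB y) _
      _ = ∑' (y : X), ENNReal.ofReal
            (Real.sqrt C * K * (m y * ‖f y‖)) := by
          apply tsum_congr
          intro y
          rw [← ENNReal.ofReal_mul
            (mul_nonneg (Real.sqrt_nonneg _) (norm_nonneg _))]
          congr 1
          ring
      _ = ENNReal.ofReal (Real.sqrt C * K) *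
            ∑' (y : X), ENNReal.ofReal (m y * ‖f y‖) := by
          rw [← ENNReal.tsum_mul_left]
          apply tsum_congr
          intro y
          rw [← ENNReal.ofReal_mul (mul_nonneg (Real.sqrt_nonneg _) hK0.le)]
      _ = ENNReal.ofReal (Real.sqrt C * K * ∑' y, m y * ‖f y‖) := by
          rw [← ENNReal.ofReal_tsum_of_nonneg
            (fun y => mul_nonneg (hm y).le (norm_nonneg _)) hf,
            ← ENNReal.ofReal_mul (mul_nonneg (Real.sqrt_nonneg _) hK0.le)]
  have hfin : (∑' x, ENNReal.ofReal
      (m x * ‖∑' y, (m y : ℂ) * k x y * f y‖)) ≠ ⊤ :=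
    ne_top_of_le_ne_top ENNReal.ofReal_ne_top key
  have hsum2 : Summable (fun x => m x * ‖∑' y, (m y : ℂ) * k x y * f y‖) :=
    (ENNReal.summable_toReal hfin).congr (fun x => ENNReal.toReal_ofReal (gnn x))
  refine ⟨hsum1, hsum2, ?_⟩
  have h1 : ENNReal.ofReal (∑' x, m x * ‖∑' y, (m y : ℂ) * k x y * f y‖) =
      ∑' x, ENNReal.ofReal (m x * ‖∑' y, (m y : ℂ) * k x y * f y‖) :=
    ENNReal.ofReal_tsum_of_nonneg gnn hsum2
  rw [← h1] at key
  rwa [ENNReal.ofReal_le_ofReal_iff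
    (mul_nonneg (mul_nonneg (Real.sqrt_nonneg _) hK0.le)
      (tsum_nonneg (fun y => mul_nonneg (hm y).le (norm_nonneg _))))] at key
end
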